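/- arXiv:2104.07870 — 5 statements merged into one kernel-verified Lean document; each statement's English description precedes it below -/
import Mathlib

section
/- For any dimension d ≥ 1 and exponent β > 0, the integral of ‖x‖^β (sup-norm) over the hypercube (-h, h)^d equals (d/(d+β))·2^d·h^{d+β}. -/
/-!
The cube `(-h, h)^d` is the ball of radius `h` for the sup-norm. Integrating in polar
coordinates, which works for any norm on an `n`-dimensional real space, gives
`∫_{‖x‖<r} ‖x‖^β dx = n · vol(B₁) · ∫₀^r y^(n-1+β) dy = n/(n+β) · vol(B₁) · r^(n+β)`,
and the unit sup-norm ball `(-1, 1)^d` has volume `2^d`.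
-/

open MeasureTheory Real

open Set Metric Module

theorem integral_Ioo_pow_mul_rpow {n : ℕ} {β r : ℝ} (hβ : -(n + 1 : ℝ) < β) (hr : 0 ≤ r) :
    ∫ y in Ioo 0 r, y ^ n * y ^ β = r ^ (n + β + 1) / (n + β + 1) := by
  have hpow : ∀ y ∈ Ioo (0 : ℝ) r, y ^ n * y ^ β = y ^ ((n : ℝ) + β) := fun y hy => by
    rw [rpow_add hy.1, rpow_natCast]
  rw [setIntegral_congr_fun measurableSet_Ioo hpow, ← integral_Ioc_eq_integral_Ioo,
    ← intervalIntegral.integral_of_le hr, integral_rpow (Or.inl (by linarith)),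
    zero_rpow (by linarith), sub_zero]

theorem setIntegral_ball_norm_rpow {E : Type*} [NormedAddCommGroup E] [NormedSpace ℝ E]
    [FiniteDimensional ℝ E] [MeasurableSpace E] [BorelSpace E] [Nontrivial E]
    (μ : Measure E) [μ.IsAddHaarMeasure] {β r : ℝ} (hβ : -(finrank ℝ E : ℝ) < β) (hr : 0 ≤ r) :
    ∫ x in ball (0 : E) r, ‖x‖ ^ β ∂μ
      = finrank ℝ E / (finrank ℝ E + β) * μ.real (ball 0 1) * r ^ (finrank ℝ E + β) := by
  have hn : 1 ≤ finrank ℝ E := finrank_pos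
  have hindicator :
      (ball (0 : E) r).indicator (‖·‖ ^ β) = fun x => (Iio r).indicator (· ^ β) ‖x‖ := by
    ext x
    simp [indicator]
  have hradial : ∫ y in Ioi (0 : ℝ), y ^ (finrank ℝ E - 1) • (Iio r).indicator (· ^ β) y
      = ∫ y in Ioo 0 r, y ^ (finrank ℝ E - 1) * y ^ β := by
    simp_rw [smul_eq_mul, ← indicator_mul_right (Iio r) (fun y : ℝ => y ^ (finrank ℝ E - 1))]
    rw [setIntegral_indicator measurableSet_Iio, Ioi_inter_Iio]
  have hcast : ((finrank ℝ E - 1 : ℕ) : ℝ) = finrank ℝ E - 1 := by push_cast [hn]; ring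
  rw [← integral_indicator measurableSet_ball, hindicator, integral_fun_norm_addHaar, hradial,
    integral_Ioo_pow_mul_rpow (by rw [hcast]; linarith) hr, hcast, nsmul_eq_mul, smul_eq_mul]
  ring_nf

theorem pi_univ_Ioo_neg_eq_ball {ι : Type*} [Fintype ι] {r : ℝ} (hr : 0 < r) :
    univ.pi (fun _ : ι => Ioo (-r) r) = ball (0 : ι → ℝ) r := by
  simp [ball_pi _ hr, Real.ball_eq_Ioo]

theorem measureReal_ball_zero_one_pi (ι : Type*) [Fintype ι] :
    volume.real (ball (0 : ι → ℝ) 1) = 2 ^ Fintype.card ι := by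
  simp [measureReal_def]

/-- The integral of the sup-norm to the power β over the open hypercube (-h,h)^d
equals (d/(d+β))·2^d·h^{d+β}. -/
theorem cube_integral_supnorm_pow (d : ℕ) (hd : 1 ≤ d) (β h : ℝ) (hβ : 0 < β) (hh : 0 < h) :
    ∫ x : Fin d → ℝ in Set.univ.pi (fun _ => Set.Ioo (-h) h), ‖x‖ ^ β
      = ((d : ℝ) / ((d : ℝ) + β)) * 2 ^ d * h ^ ((d : ℝ) + β) := by
  have : Nonempty (Fin d) := ⟨⟨0, hd⟩⟩
  have hβ' : -(finrank ℝ (Fin d → ℝ) : ℝ) < β := by rw [finrank_fin_fun]; linarith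
  rw [pi_univ_Ioo_neg_eq_ball hh, setIntegral_ball_norm_rpow volume hβ' hh.le,
    measureReal_ball_zero_one_pi, finrank_fin_fun, Fintype.card_fin]
end

section
/- Let f be a probability density on ℝ^d with mode x₀ satisfying f(x) ≥ f(x₀) - C₀‖x-x₀‖^β for ‖x-x₀‖ ≤ h₀ (sup-norm). Then for any bin size 0 < h ≤ h₀, the probability mass of the bin [k₀h, (k₀+1)h) containing x₀ (where k₀ = ⌊x₀/h⌋ componentwise) is at least f(x₀)h^d - C₁h^{d+β}, where C₁ = C₀ ∫_{[0,1)^d} ‖x‖^β dx. -/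
/-!
On the bin `B`, `f ≥ f x₀ - C₀ ‖x - x₀‖ ^ β`, so it suffices to show
`∫_B ‖x - x₀‖ ^ β ≤ ∫_{[0,h)^d} ‖y‖ ^ β`, the right side being `h ^ (d + β) ∫_{[0,1)^d} ‖u‖ ^ β`
by scaling: the moment is largest when the centre sits at a corner of the box. By the layer-cake
formula it is enough to compare the volumes of the superlevel sets, i.e. of the box minus a
sup-norm ball of radius `r`. Since both boxes have volume `h ^ d`, this amounts to the box around
`x₀` meeting the ball around `x₀` in at least as much volume as `[0,h)^d` meets the ball around
`0`. Both are products, and in each coordinate `[a, a + h) ∩ [c - r, c + r]` has length at least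
`min h r`, while `[0, h) ∩ [-r, r]` has length exactly that.
-/

open MeasureTheory Real Set Metric
open scoped Pointwise

theorem integral_le_integral_of_meas_lt_le {α β : Type*} [MeasurableSpace α] [MeasurableSpace β]
    {μ : Measure α} {ν : Measure β} {f : α → ℝ} {g : β → ℝ}
    (hf : 0 ≤ᵐ[μ] f) (hfm : AEMeasurable f μ) (hg : 0 ≤ᵐ[ν] g) (hgi : Integrable g ν)
    (h : ∀ t > 0, μ {x | t < f x} ≤ ν {y | t < g y}) :
    ∫ x, f x ∂μ ≤ ∫ y, g y ∂ν := by
  rw [integral_eq_lintegral_of_nonneg_ae hf hfm.aestronglyMeasurable,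
    integral_eq_lintegral_of_nonneg_ae hg hgi.aestronglyMeasurable]
  refine ENNReal.toReal_mono hgi.lintegral_lt_top.ne ?_
  rw [lintegral_eq_lintegral_meas_lt μ hf hfm, lintegral_eq_lintegral_meas_lt ν hg hgi.aemeasurable]
  exact setLIntegral_mono' measurableSet_Ioi h

theorem measure_sdiff_le_measure_sdiff {α : Type*} [MeasurableSpace α] {μ : Measure α}
    {s t u v : Set α} (hst : μ s = μ t) (hs : μ s ≠ ⊤) (hu : MeasurableSet u)
    (hv : MeasurableSet v) (h : μ (t ∩ v) ≤ μ (s ∩ u)) : μ (s \ u) ≤ μ (t \ v) := by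
  have hsu : μ (s ∩ u) ≠ ⊤ := ((measure_mono inter_subset_left).trans_lt hs.lt_top).ne
  refine (ENNReal.add_le_add_iff_right hsu).1 ?_
  rw [measure_sdiff_add_inter s hu, hst, ← measure_sdiff_add_inter t hv]
  gcongr

theorem setOf_lt_rpow_norm_sub_eq {E : Type*} [SeminormedAddCommGroup E] (c : E) {t β : ℝ}
    (ht : 0 ≤ t) (hβ : 0 < β) : {x | t < ‖x - c‖ ^ β} = (closedBall c (t ^ β⁻¹))ᶜ := by
  ext x
  rw [mem_ofPred_eq, mem_compl_iff, mem_closedBall, not_le, dist_eq_norm,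
    rpow_inv_lt_iff_of_pos ht (norm_nonneg _) hβ]

theorem mem_Icc_floor_div_mul {x h : ℝ} (hh : 0 < h) :
    x ∈ Icc (⌊x / h⌋ * h) (⌊x / h⌋ * h + h) := by
  refine ⟨(le_div_iff₀ hh).1 (Int.floor_le _), ?_⟩
  have := (div_lt_iff₀ hh).1 (Int.lt_floor_add_one (x / h))
  linarith

theorem le_volume_Ico_inter_closedBall {a c h s : ℝ} (hac : a ≤ c) (hca : c ≤ a + h)
    (hs : 0 ≤ s) : ENNReal.ofReal (min h s) ≤ volume (Ico a (a + h) ∩ closedBall c s) := by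
  calc ENNReal.ofReal (min h s)
      ≤ volume (Ico (max a (c - s)) (min (a + h) (c + s))) := by
        rw [volume_Ico]
        refine ENNReal.ofReal_le_ofReal ?_
        rcases min_cases (a + h) (c + s) with ⟨h1, _⟩ | ⟨h1, _⟩ <;>
          rcases max_cases a (c - s) with ⟨h2, _⟩ | ⟨h2, _⟩ <;>
          rcases min_cases h s with ⟨h3, _⟩ | ⟨h3, _⟩ <;> rw [h1, h2, h3] <;> linarith
    _ ≤ volume (Ico a (a + h) ∩ closedBall c s) := by
        rw [closedBall_eq_Icc]
        refine measure_mono fun x ⟨hx₁, hx₂⟩ => ?_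
        simp only [max_le_iff, lt_min_iff] at hx₁ hx₂
        exact ⟨⟨hx₁.1, hx₂.1⟩, hx₁.2, hx₂.2.le⟩

theorem volume_Ico_zero_inter_closedBall_zero_le (h s : ℝ) :
    volume (Ico 0 h ∩ closedBall 0 s) ≤ ENNReal.ofReal (min h s) := by
  calc volume (Ico 0 h ∩ closedBall 0 s) ≤ volume (Icc 0 (min h s)) := by
        refine measure_mono fun x ⟨hx, hxs⟩ => ⟨hx.1, le_min hx.2.le ?_⟩
        rw [mem_closedBall, dist_zero_right, norm_eq_abs] at hxs
        exact (le_abs_self x).trans hxs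
    _ = ENNReal.ofReal (min h s) := by rw [volume_Icc, sub_zero]

section Box

variable {ι : Type*} [Fintype ι]

theorem integrableOn_rpow_norm_sub_box (c a b : ι → ℝ) {β : ℝ} (hβ : 0 ≤ β) :
    IntegrableOn (fun x => ‖x - c‖ ^ β) (univ.pi fun i => Ico (a i) (b i)) := by
  refine (ContinuousOn.integrableOn_compact isCompact_Icc ?_).mono_set
    (pi_univ_Icc a b ▸ pi_mono fun i _ => Ico_subset_Icc_self)
  exact ((continuous_id.sub continuous_const).norm.rpow_const fun _ => Or.inr hβ).continuousOn

theorem box_subset_closedBall {a c : ι → ℝ} {h : ℝ} (hh : 0 ≤ h)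
    (hc : ∀ i, c i ∈ Icc (a i) (a i + h)) :
    univ.pi (fun i => Ico (a i) (a i + h)) ⊆ closedBall c h := by
  rw [closedBall_pi _ hh]
  refine pi_mono fun i _ x hx => ?_
  rw [closedBall_eq_Icc]
  exact ⟨by linarith [hx.1, (hc i).2], by linarith [hx.2, (hc i).1]⟩

theorem volume_box_zero_inter_closedBall_le {a c : ι → ℝ} {h r : ℝ}
    (hc : ∀ i, c i ∈ Icc (a i) (a i + h)) (hr : 0 ≤ r) :
    volume (univ.pi (fun _ : ι => Ico (0 : ℝ) h) ∩ closedBall 0 r)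
      ≤ volume (univ.pi (fun i => Ico (a i) (a i + h)) ∩ closedBall c r) := by
  rw [closedBall_pi _ hr, closedBall_pi _ hr, ← pi_inter_distrib, ← pi_inter_distrib,
    volume_pi_pi, volume_pi_pi]
  exact Finset.prod_le_prod' fun i _ => (volume_Ico_zero_inter_closedBall_zero_le h r).trans
    (le_volume_Ico_inter_closedBall (hc i).1 (hc i).2 hr)

theorem volume_box_sdiff_closedBall_le {a c : ι → ℝ} {h r : ℝ}
    (hc : ∀ i, c i ∈ Icc (a i) (a i + h)) (hr : 0 ≤ r) :
    volume (univ.pi (fun i => Ico (a i) (a i + h)) \ closedBall c r)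
      ≤ volume (univ.pi (fun _ : ι => Ico (0 : ℝ) h) \ closedBall 0 r) := by
  refine measure_sdiff_le_measure_sdiff ?_ ?_ isClosed_closedBall.measurableSet
    isClosed_closedBall.measurableSet (volume_box_zero_inter_closedBall_le hc hr)
  all_goals simp [volume_pi_Ico]

theorem setIntegral_rpow_norm_sub_box_le {a c : ι → ℝ} {h β : ℝ}
    (hc : ∀ i, c i ∈ Icc (a i) (a i + h)) (hβ : 0 < β) :
    ∫ x in univ.pi (fun i => Ico (a i) (a i + h)), ‖x - c‖ ^ β
      ≤ ∫ y in univ.pi (fun _ : ι => Ico (0 : ℝ) h), ‖y‖ ^ β := by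
  have hcont : Continuous fun x => ‖x - c‖ ^ β :=
    (continuous_id.sub continuous_const).norm.rpow_const fun _ => Or.inr hβ.le
  calc ∫ x in univ.pi (fun i => Ico (a i) (a i + h)), ‖x - c‖ ^ β
      ≤ ∫ y in univ.pi (fun _ : ι => Ico (0 : ℝ) h), ‖y - 0‖ ^ β := by
        refine integral_le_integral_of_meas_lt_le
          (.of_forall fun _ => by positivity) hcont.aemeasurable
          (.of_forall fun _ => by positivity)
          (integrableOn_rpow_norm_sub_box 0 0 (fun _ => h) hβ.le) fun t ht => ?_
        rw [setOf_lt_rpow_norm_sub_eq _ ht.le hβ, setOf_lt_rpow_norm_sub_eq _ ht.le hβ,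
          Measure.restrict_apply isClosed_closedBall.measurableSet.compl,
          Measure.restrict_apply isClosed_closedBall.measurableSet.compl, inter_comm,
          ← sdiff_eq, inter_comm, ← sdiff_eq]
        exact volume_box_sdiff_closedBall_le hc (by positivity)
    _ = ∫ y in univ.pi (fun _ : ι => Ico (0 : ℝ) h), ‖y‖ ^ β := by simp only [sub_zero]

theorem setIntegral_rpow_norm_box_eq {h : ℝ} (hh : 0 < h) (β : ℝ) :
    ∫ y in univ.pi fun _ : ι => Ico (0 : ℝ) h, ‖y‖ ^ β
      = (∫ u in univ.pi fun _ : ι => Ico (0 : ℝ) 1, ‖u‖ ^ β) * h ^ ((Fintype.card ι : ℝ) + β) := by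
  have hscale := Measure.setIntegral_comp_smul_of_pos volume (fun y : ι → ℝ => ‖y‖ ^ β)
    (univ.pi fun _ => Ico 0 1) hh
  have hbox : h • (univ.pi fun _ : ι => Ico (0 : ℝ) 1) = univ.pi fun _ => Ico 0 h := by
    simp only [smul_set_univ_pi, Pi.smul_def, LinearOrderedField.smul_Ico hh, mul_zero, mul_one]
  simp only [norm_smul, norm_of_nonneg hh.le, mul_rpow hh.le (norm_nonneg _),
    integral_const_mul, hbox, Module.finrank_fintype_fun_eq_card, smul_eq_mul] at hscale
  rw [mul_comm, rpow_add hh, rpow_natCast, mul_assoc, hscale, mul_inv_cancel_left₀ (by positivity)]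

end Box

theorem mass_of_mode_bin_lower_bound_general (d : ℕ)
    (f : (Fin d → ℝ) → ℝ) (x₀ : Fin d → ℝ)
    (C₀ h₀ β : ℝ) (hC₀ : 0 < C₀) (hβ : 0 < β)
    (hf_int : ∫ x, f x = 1)
    (hmode : ∀ x, ‖x - x₀‖ ≤ h₀ → f x₀ - C₀ * ‖x - x₀‖ ^ β ≤ f x)
    (h : ℝ) (hh : 0 < h) (hhh₀ : h ≤ h₀) :
    f x₀ * h ^ d
      - (C₀ * ∫ x : Fin d → ℝ in Set.univ.pi (fun _ => Set.Ico (0:ℝ) 1), ‖x‖ ^ β)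
          * h ^ ((d : ℝ) + β)
      ≤ ∫ x : Fin d → ℝ in
          Set.univ.pi (fun i =>
            Set.Ico ((⌊x₀ i / h⌋ : ℝ) * h) (((⌊x₀ i / h⌋ : ℝ) + 1) * h)),
          f x := by
  set a : Fin d → ℝ := fun i => ⌊x₀ i / h⌋ * h
  set B := univ.pi fun i => Ico (a i) (a i + h)
  have hx₀ : ∀ i, x₀ i ∈ Icc (a i) (a i + h) := fun i => mem_Icc_floor_div_mul hh
  have hB : ∀ x ∈ B, ‖x - x₀‖ ≤ h₀ := fun x hx =>
    (mem_closedBall_iff_norm.1 (box_subset_closedBall hh.le hx₀ hx)).trans hhh₀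
  have hvol : volume.real B = h ^ d := by simp [B, measureReal_def, volume_pi_Ico, hh.le]
  have hg := integrableOn_rpow_norm_sub_box x₀ a (a · + h) hβ.le
  have hconst : IntegrableOn (fun _ => f x₀) B := integrableOn_const (by simp [B, volume_pi_Ico])
  have hscale := setIntegral_rpow_norm_box_eq (ι := Fin d) hh β
  rw [Fintype.card_fin] at hscale
  simp only [add_one_mul]
  calc f x₀ * h ^ d - (C₀ * ∫ u in univ.pi fun _ => Ico (0 : ℝ) 1, ‖u‖ ^ β) * h ^ ((d : ℝ) + β)
      ≤ f x₀ * h ^ d - C₀ * ∫ x in B, ‖x - x₀‖ ^ β := by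
        rw [mul_assoc, ← hscale]
        gcongr
        exact setIntegral_rpow_norm_sub_box_le hx₀ hβ
    _ = ∫ x in B, (f x₀ - C₀ * ‖x - x₀‖ ^ β) := by
        rw [integral_sub hconst (hg.const_mul C₀), setIntegral_const, integral_const_mul,
          smul_eq_mul, hvol, mul_comm]
    _ ≤ ∫ x in B, f x :=
        setIntegral_mono_on (hconst.sub (hg.const_mul C₀))
          (integrable_of_integral_eq_one hf_int).integrableOn
          (MeasurableSet.univ_pi fun _ => measurableSet_Ico) fun x hx => hmode x (hB x hx)

/-- If the density f satisfies f(x) ≥ f(x₀) - C₀‖x-x₀‖^β near the mode x₀, then for any bin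
size 0 < h ≤ h₀, the probability mass of the bin [k₀h,(k₀+1)h) containing x₀
(with k₀ = ⌊x₀/h⌋ componentwise) is at least f(x₀)h^d - C₁h^{d+β},
where C₁ = C₀ ∫_{[0,1)^d} ‖x‖^β dx. -/
theorem mass_of_mode_bin_lower_bound (d : ℕ) (hd : 1 ≤ d)
    (f : (Fin d → ℝ) → ℝ) (x₀ : Fin d → ℝ)
    (C₀ h₀ β : ℝ) (hC₀ : 0 < C₀) (hh₀ : 0 < h₀) (hβ : 0 < β)
    (hf_nonneg : ∀ x, 0 ≤ f x) (hf_int : ∫ x, f x = 1)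
    (hmode : ∀ x, ‖x - x₀‖ ≤ h₀ → f x₀ - C₀ * ‖x - x₀‖ ^ β ≤ f x)
    (h : ℝ) (hh : 0 < h) (hhh₀ : h ≤ h₀) :
    f x₀ * h ^ d
      - (C₀ * ∫ x : Fin d → ℝ in Set.univ.pi (fun _ => Set.Ico (0:ℝ) 1), ‖x‖ ^ β)
          * h ^ ((d : ℝ) + β)
      ≤ ∫ x : Fin d → ℝ in
          Set.univ.pi (fun i =>
            Set.Ico ((⌊x₀ i / h⌋ : ℝ) * h) (((⌊x₀ i / h⌋ : ℝ) + 1) * h)),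
          f x :=
  mass_of_mode_bin_lower_bound_general d f x₀ C₀ h₀ β hC₀ hβ hf_int hmode h hh hhh₀
end

section
/- Let f be a density on ℝ^d with mode x₀ satisfying f(x) ≤ f(x₀) - c₀(‖x-x₀‖ ∧ h₀)^β for all x (sup-norm, with a ∧ b = min(a,b)). Then for any h > 0 and any k ∈ ℤ^d with ‖k - k₀‖ ≥ 3 where k₀ = ⌊x₀/h⌋, the probability mass p_k = ∫_{[kh,(k+1)h)} f(x)dx satisfies p_k ≤ f(x₀)h^d - c₀·((‖k-k₀‖-2) ∧ (h₀/h))^β · h^{d+β}. -/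
open MeasureTheory Real

/-!
Every point of the bin `k` lies at sup-distance at least `(‖k - k₀‖ - 1) h` from the mode,
since in the coordinate realising `‖k - k₀‖` the two bins are separated by `|kᵢ - k₀ᵢ| - 1`
whole cells. The decay hypothesis therefore bounds `f` on the bin by the constant
`f x₀ - c₀ (h m)^β` with `m = (‖k - k₀‖ - 2) ∧ (h₀ / h)`, and integrating this constant over a
cell of volume `h^d` gives the claim.
-/

lemma setIntegral_le_of_le_const_real {X : Type*} [MeasurableSpace X] {μ : Measure X} {s : Set X}
    {f : X → ℝ} {c : ℝ} (hs : MeasurableSet s) (hμs : μ s ≠ ⊤) (hf : ∀ x ∈ s, f x ≤ c)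
    (hfint : IntegrableOn f s μ) :
    ∫ x in s, f x ∂μ ≤ c * μ.real s := by
  rw [mul_comm, ← smul_eq_mul, ← setIntegral_const c]
  exact setIntegral_mono_on hfint (integrableOn_const hμs) hs hf

section GridCell

variable {ι : Type*}

def gridCell (h : ℝ) (k : ι → ℤ) : Set (ι → ℝ) :=
  Set.univ.pi fun i => Set.Ico ((k i : ℝ) * h) (((k i : ℝ) + 1) * h)

lemma measurableSet_gridCell [Countable ι] (h : ℝ) (k : ι → ℤ) : MeasurableSet (gridCell h k) :=
  MeasurableSet.univ_pi fun _ => measurableSet_Ico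

lemma volume_gridCell [Fintype ι] (h : ℝ) (k : ι → ℤ) :
    volume (gridCell h k) = ENNReal.ofReal h ^ Fintype.card ι := by
  simp [gridCell, volume_pi_pi, Real.volume_Ico, add_mul]

lemma volume_gridCell_ne_top [Fintype ι] (h : ℝ) (k : ι → ℤ) : volume (gridCell h k) ≠ ⊤ := by
  simp [volume_gridCell]

lemma measureReal_gridCell [Fintype ι] {h : ℝ} (hh : 0 ≤ h) (k : ι → ℤ) :
    volume.real (gridCell h k) = h ^ Fintype.card ι := by
  simp [measureReal_def, volume_gridCell, hh]

lemma mem_gridCell_floor_div {h : ℝ} (hh : 0 < h) (x : ι → ℝ) :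
    x ∈ gridCell h (fun i => ⌊x i / h⌋) := fun _ _ =>
  ⟨(le_div_iff₀ hh).1 (Int.floor_le _), (div_lt_iff₀ hh).1 (Int.lt_floor_add_one _)⟩

lemma sub_one_mul_le_abs_sub_of_mem_Ico {h a b : ℝ} {m n : ℤ}
    (ha : a ∈ Set.Ico ((m : ℝ) * h) ((m + 1) * h)) (hb : b ∈ Set.Ico ((n : ℝ) * h) ((n + 1) * h)) :
    (|(m : ℝ) - n| - 1) * h ≤ |a - b| := by
  obtain ⟨ha₁, ha₂⟩ := ha
  obtain ⟨hb₁, hb₂⟩ := hb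
  rcases abs_cases ((m : ℝ) - n) with ⟨hmn, -⟩ | ⟨hmn, -⟩ <;> rw [hmn]
  · linarith [le_abs_self (a - b)]
  · linarith [neg_abs_le (a - b)]

lemma sub_one_mul_le_norm_sub_of_mem_gridCell [Fintype ι] {h : ℝ} (hh : 0 < h) {k l : ι → ℤ}
    {x y : ι → ℝ} (hx : x ∈ gridCell h k) (hy : y ∈ gridCell h l) :
    (‖fun i => ((k i - l i : ℤ) : ℝ)‖ - 1) * h ≤ ‖x - y‖ := by
  suffices ‖fun i => ((k i - l i : ℤ) : ℝ)‖ ≤ ‖x - y‖ / h + 1 by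
    rw [← le_div_iff₀ hh]; linarith
  refine (pi_norm_le_iff_of_nonneg (by positivity)).2 fun i => ?_
  have hcoord := sub_one_mul_le_abs_sub_of_mem_Ico (hx i trivial) (hy i trivial)
  have hsup : |x i - y i| ≤ ‖x - y‖ := norm_le_pi_norm (x - y) i
  rw [Int.cast_sub, Real.norm_eq_abs, ← sub_le_iff_le_add, le_div_iff₀ hh]
  exact hcoord.trans hsup

lemma mul_min_le_min_norm_sub_of_mem_gridCell [Fintype ι] {h h₀ : ℝ} (hh : 0 < h)
    {k : ι → ℤ} {x x₀ : ι → ℝ} (hx : x ∈ gridCell h k) :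
    h * min (‖fun i => ((k i - ⌊x₀ i / h⌋ : ℤ) : ℝ)‖ - 2) (h₀ / h) ≤ min ‖x - x₀‖ h₀ := by
  have hdist := sub_one_mul_le_norm_sub_of_mem_gridCell hh hx (mem_gridCell_floor_div hh x₀)
  rw [mul_min_of_nonneg _ _ hh.le, mul_div_cancel₀ _ hh.ne']
  exact min_le_min (by linarith) le_rfl

end GridCell

theorem mass_of_far_bin_upper_bound_general (d : ℕ)
    (f : (Fin d → ℝ) → ℝ) (x₀ : Fin d → ℝ)
    (c₀ h₀ β : ℝ) (hc₀ : 0 < c₀) (hh₀ : 0 < h₀) (hβ : 0 < β)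
    (hf_int : ∫ x, f x = 1)
    (hdecay : ∀ x, f x ≤ f x₀ - c₀ * (min ‖x - x₀‖ h₀) ^ β)
    (h : ℝ) (hh : 0 < h) (k : Fin d → ℤ)
    (hk : 3 ≤ ‖(fun i => ((k i - ⌊x₀ i / h⌋ : ℤ) : ℝ))‖) :
    (∫ x : Fin d → ℝ in
        Set.univ.pi (fun i => Set.Ico ((k i : ℝ) * h) (((k i : ℝ) + 1) * h)), f x)
      ≤ f x₀ * h ^ d
        - c₀ * (min (‖(fun i => ((k i - ⌊x₀ i / h⌋ : ℤ) : ℝ))‖ - 2) (h₀ / h)) ^ β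
            * h ^ ((d : ℝ) + β) := by
  set m := min (‖(fun i => ((k i - ⌊x₀ i / h⌋ : ℤ) : ℝ))‖ - 2) (h₀ / h)
  have hm : 0 ≤ m := le_min (by linarith) (by positivity)
  have hbound : ∀ x ∈ gridCell h k, f x ≤ f x₀ - c₀ * (h * m) ^ β := fun x hx =>
    (hdecay x).trans <| by
      gcongr
      exact mul_min_le_min_norm_sub_of_mem_gridCell hh hx
  have hvol : volume.real (gridCell h k) = h ^ d := by
    rw [measureReal_gridCell hh.le, Fintype.card_fin]
  calc ∫ x in gridCell h k, f x
      ≤ (f x₀ - c₀ * (h * m) ^ β) * h ^ d := by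
        rw [← hvol]
        exact setIntegral_le_of_le_const_real (measurableSet_gridCell h k)
          (volume_gridCell_ne_top h k) hbound
          (integrable_of_integral_eq_one hf_int).integrableOn
    _ = f x₀ * h ^ d - c₀ * m ^ β * h ^ ((d : ℝ) + β) := by
        rw [mul_rpow hh.le hm, rpow_add hh, rpow_natCast]
        ring

/-- If the density f satisfies f(x) ≤ f(x₀) - c₀(‖x-x₀‖ ∧ h₀)^β everywhere, then for any
h > 0 and any bin index k with ‖k-k₀‖ ≥ 3 (k₀ = ⌊x₀/h⌋), the mass of the bin
[kh,(k+1)h) is at most f(x₀)h^d - c₀((‖k-k₀‖-2) ∧ (h₀/h))^β h^{d+β}. -/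
theorem mass_of_far_bin_upper_bound (d : ℕ) (hd : 1 ≤ d)
    (f : (Fin d → ℝ) → ℝ) (x₀ : Fin d → ℝ)
    (c₀ h₀ β : ℝ) (hc₀ : 0 < c₀) (hh₀ : 0 < h₀) (hβ : 0 < β)
    (hf_nonneg : ∀ x, 0 ≤ f x) (hf_int : ∫ x, f x = 1)
    (hdecay : ∀ x, f x ≤ f x₀ - c₀ * (min ‖x - x₀‖ h₀) ^ β)
    (h : ℝ) (hh : 0 < h) (k : Fin d → ℤ)
    (hk : 3 ≤ ‖(fun i => ((k i - ⌊x₀ i / h⌋ : ℤ) : ℝ))‖) :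
    (∫ x : Fin d → ℝ in
        Set.univ.pi (fun i => Set.Ico ((k i : ℝ) * h) (((k i : ℝ) + 1) * h)), f x)
      ≤ f x₀ * h ^ d
        - c₀ * (min (‖(fun i => ((k i - ⌊x₀ i / h⌋ : ℤ) : ℝ))‖ - 2) (h₀ / h)) ^ β
            * h ^ ((d : ℝ) + β) :=
  mass_of_far_bin_upper_bound_general d f x₀ c₀ h₀ β hc₀ hh₀ hβ hf_int hdecay h hh k hk
end

section
/- With f₂ defined as the perturbed density in the two-point lower-bound construction (f₂(t) = f₁(t) off (-h̲,h̲), f₂(t) = 1 - h^β on (-h̲,h̲)\(0̲,h̲), and f₂(t) = 1 + (2^d-1)h^β - 2^{d+β}‖t - h̲/2‖^β on (0̲,h̲)), f₂ has a unique maximizer at h̲/2, and for all t with ‖t - h̲/2‖ ≤ h₀ - h/2 one has f₂(h̲/2) - 2^{d+β}‖t - h̲/2‖^β ≤ f₂(t) ≤ f₂(h̲/2) - 2^{-β}‖t - h̲/2‖^β. -/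
open MeasureTheory Real

/-- The open sup-norm cube (a,b)^d. -/
def supCube (d : ℕ) (a b : ℝ) : Set (Fin d → ℝ) :=
  Set.univ.pi fun _ => Set.Ioo a b

open Classical in
/-- The perturbed density f₂ of the two-point lower-bound construction. -/
noncomputable def fTwo (d : ℕ) (β h : ℝ) (f₁ : (Fin d → ℝ) → ℝ) : (Fin d → ℝ) → ℝ :=
  fun t =>
    if t ∈ supCube d 0 h then
      1 + ((2 : ℝ) ^ d - 1) * h ^ β - 2 ^ ((d : ℝ) + β) * ‖t - (fun _ => h / 2)‖ ^ β
    else if t ∈ supCube d (-h) h then 1 - h ^ β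
    else f₁ t

/-- f₂ has a unique maximizer at h̲/2 and satisfies the two-sided power decay
f₂(h̲/2) - 2^{d+β}‖t-h̲/2‖^β ≤ f₂(t) ≤ f₂(h̲/2) - 2^{-β}‖t-h̲/2‖^β
for ‖t - h̲/2‖ ≤ h₀ - h/2. -/
theorem fTwo_mode_and_decay (d : ℕ) (hd : 1 ≤ d) (β h₀ h : ℝ)
    (hβ : 0 < β) (hh₀ : 0 < h₀) (hh₀1 : h₀ < 1) (hh : 0 < h) (hhh₀ : h ≤ h₀)
    (f₁ : (Fin d → ℝ) → ℝ)
    (hf₁eq : ∀ t : Fin d → ℝ, ‖t‖ ≤ h₀ → f₁ t = 1 - ‖t‖ ^ β)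
    (hf₁far : ∀ t : Fin d → ℝ, h₀ ≤ ‖t‖ → f₁ t ≤ 1 - h₀ ^ β) :
    (∀ t : Fin d → ℝ, t ≠ (fun _ => h / 2) →
        fTwo d β h f₁ t < fTwo d β h f₁ (fun _ => h / 2)) ∧
    (∀ t : Fin d → ℝ, ‖t - (fun _ => h / 2)‖ ≤ h₀ - h / 2 →
        fTwo d β h f₁ (fun _ => h / 2)
            - 2 ^ ((d : ℝ) + β) * ‖t - (fun _ => h / 2)‖ ^ β ≤ fTwo d β h f₁ t ∧
        fTwo d β h f₁ t
          ≤ fTwo d β h f₁ (fun _ => h / 2) - 2 ^ (-β) * ‖t - (fun _ => h / 2)‖ ^ β) := by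
  haveI hne : Nonempty (Fin d) := ⟨⟨0, hd⟩⟩
  have hh2 : (0:ℝ) < h / 2 := by linarith
  have hβ0 : (0:ℝ) ≤ β := hβ.le
  have mem1 : ∀ t : Fin d → ℝ, t ∈ supCube d 0 h ↔ ‖t - (fun _ => h/2)‖ < h/2 := by
    intro t
    rw [pi_norm_lt_iff hh2]
    simp only [supCube, Set.mem_pi, Set.mem_univ, forall_true_left, Set.mem_Ioo,
      Pi.sub_apply, Real.norm_eq_abs, abs_sub_lt_iff]
    exact forall_congr' fun i => ⟨fun ⟨a,b⟩ => ⟨by linarith, by linarith⟩,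
      fun ⟨a,b⟩ => ⟨by linarith, by linarith⟩⟩
  have mem2 : ∀ t : Fin d → ℝ, t ∈ supCube d (-h) h ↔ ‖t‖ < h := by
    intro t
    rw [pi_norm_lt_iff hh]
    simp only [supCube, Set.mem_pi, Set.mem_univ, forall_true_left, Set.mem_Ioo,
      Real.norm_eq_abs, abs_lt]
  have hcmem : (fun _ => h/2 : Fin d → ℝ) ∈ supCube d 0 h := by
    rw [mem1]; simp [hh2]
  have hval : fTwo d β h f₁ (fun _ => h/2) = 1 + ((2:ℝ)^d - 1) * h ^ β := by
    simp [fTwo, hcmem, Real.zero_rpow hβ.ne']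
  have h2d : (2:ℝ) ≤ 2 ^ d := by
    calc (2:ℝ) = 2^1 := (pow_one 2).symm
    _ ≤ 2^d := pow_le_pow_right₀ one_le_two hd
  have hhb : (0:ℝ) < h ^ β := Real.rpow_pos_of_pos hh β
  have hsplit : (2:ℝ) ^ ((d:ℝ) + β) = 2^d * 2^β := by
    rw [Real.rpow_add two_pos, Real.rpow_natCast]
  have h2β : (0:ℝ) < (2:ℝ)^β := Real.rpow_pos_of_pos two_pos β
  have hnormc : ‖(fun _ => h/2 : Fin d → ℝ)‖ = h/2 := by
    rw [pi_norm_const, Real.norm_eq_abs, abs_of_pos hh2]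
  constructor
  · intro t ht
    rw [hval]
    by_cases h1 : t ∈ supCube d 0 h
    · have hr : 0 < ‖t - (fun _ => h/2 : Fin d → ℝ)‖ := by
        rw [norm_pos_iff]
        exact sub_ne_zero.mpr ht
      have hpos : 0 < 2 ^ ((d:ℝ)+β) * ‖t - (fun _ => h/2 : Fin d → ℝ)‖ ^ β :=
        mul_pos (Real.rpow_pos_of_pos two_pos _) (Real.rpow_pos_of_pos hr β)
      simp only [fTwo, if_pos h1]
      linarith
    · by_cases h2 : t ∈ supCube d (-h) h
      · simp only [fTwo, if_neg h1, if_pos h2]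
        nlinarith
      · simp only [fTwo, if_neg h1, if_neg h2]
        have hth : h ≤ ‖t‖ := le_of_not_gt (fun hlt => h2 ((mem2 t).2 hlt))
        have key : f₁ t ≤ 1 - h ^ β := by
          rcases le_total ‖t‖ h₀ with hc1 | hc1
          · rw [hf₁eq t hc1]
            have := Real.rpow_le_rpow hh.le hth hβ0
            linarith
          · have h1' := hf₁far t hc1
            have := Real.rpow_le_rpow hh.le hhh₀ hβ0
            linarith
        nlinarith
  · intro t hrle
    have hr0 : 0 ≤ ‖t - (fun _ => h/2 : Fin d → ℝ)‖ := norm_nonneg _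
    have hrb0 : 0 ≤ ‖t - (fun _ => h/2 : Fin d → ℝ)‖ ^ β := Real.rpow_nonneg hr0 β
    have hneg : (0:ℝ) < (2:ℝ)^(-β) := Real.rpow_pos_of_pos two_pos _
    have hmulinv : (2:ℝ)^(-β) * (2:ℝ)^β = 1 := by
      rw [← Real.rpow_add two_pos]; simp
    rw [hval]
    by_cases h1 : t ∈ supCube d 0 h
    · simp only [fTwo, if_pos h1]
      refine ⟨le_refl _, ?_⟩
      have hexp : (2:ℝ)^(-β) ≤ 2^((d:ℝ)+β) := by
        apply Real.rpow_le_rpow_of_exponent_le one_le_two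
        have : (1:ℝ) ≤ (d:ℝ) := by exact_mod_cast hd
        linarith
      nlinarith [mul_le_mul_of_nonneg_right hexp hrb0]
    · have hrge : h/2 ≤ ‖t - (fun _ => h/2 : Fin d → ℝ)‖ :=
        le_of_not_gt (fun hlt => h1 ((mem1 t).2 hlt))
      have hA : h ^ β ≤ 2^β * ‖t - (fun _ => h/2 : Fin d → ℝ)‖^β := by
        calc h ^ β ≤ (2*‖t - (fun _ => h/2 : Fin d → ℝ)‖)^β :=
              Real.rpow_le_rpow hh.le (by linarith) hβ0
        _ = 2^β * ‖t - (fun _ => h/2 : Fin d → ℝ)‖^β := Real.mul_rpow (by norm_num) hr0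
      by_cases h2 : t ∈ supCube d (-h) h
      · simp only [fTwo, if_neg h1, if_pos h2]
        have htn : ‖t‖ < h := (mem2 t).1 h2
        have htri := norm_sub_le t (fun _ => h/2 : Fin d → ℝ)
        rw [hnormc] at htri
        have hrub : ‖t - (fun _ => h/2 : Fin d → ℝ)‖ ≤ 2*h := by linarith
        have hB : ‖t - (fun _ => h/2 : Fin d → ℝ)‖ ^ β ≤ 2^β * h^β := by
          calc ‖t - (fun _ => h/2 : Fin d → ℝ)‖^β ≤ (2*h)^β :=
                Real.rpow_le_rpow hr0 hrub hβ0
          _ = 2^β * h^β := Real.mul_rpow (by norm_num) hh.le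
        constructor
        · rw [hsplit]
          nlinarith [mul_le_mul_of_nonneg_left hA (by positivity : (0:ℝ) ≤ 2^d)]
        · have hD : (2:ℝ)^(-β) * ‖t - (fun _ => h/2 : Fin d → ℝ)‖^β ≤ h^β := by
            have := mul_le_mul_of_nonneg_left hB hneg.le
            rw [← mul_assoc, hmulinv, one_mul] at this
            exact this
          nlinarith [mul_nonneg (by linarith : (0:ℝ) ≤ (2:ℝ)^d - 1) hhb.le]
      · simp only [fTwo, if_neg h1, if_neg h2]
        have hth : h ≤ ‖t‖ := le_of_not_gt (fun hlt => h2 ((mem2 t).2 hlt))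
        have htri2 := norm_sub_norm_le t (fun _ => h/2 : Fin d → ℝ)
        rw [hnormc] at htri2
        have htri := norm_sub_le t (fun _ => h/2 : Fin d → ℝ)
        rw [hnormc] at htri
        have hsh₀ : ‖t‖ ≤ h₀ := by linarith
        rw [hf₁eq t hsh₀]
        have hC : ‖t‖^β ≤ 2^β * ‖t - (fun _ => h/2 : Fin d → ℝ)‖^β := by
          calc ‖t‖^β ≤ (2*‖t - (fun _ => h/2 : Fin d → ℝ)‖)^β :=
                Real.rpow_le_rpow (norm_nonneg t) (by linarith) hβ0
          _ = _ := Real.mul_rpow (by norm_num) hr0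
        have hE : ‖t - (fun _ => h/2 : Fin d → ℝ)‖^β ≤ 2^β * ‖t‖^β := by
          calc ‖t - (fun _ => h/2 : Fin d → ℝ)‖^β ≤ (2*‖t‖)^β :=
                Real.rpow_le_rpow hr0 (by linarith) hβ0
          _ = _ := Real.mul_rpow (by norm_num) (norm_nonneg t)
        constructor
        · rw [hsplit]
          have hint1 := mul_le_mul_of_nonneg_left hA (by linarith : (0:ℝ) ≤ (2:ℝ)^d - 1)
          have heq : ((2:ℝ)^d-1)*(2^β*‖t - (fun _ => h/2 : Fin d → ℝ)‖^β)
              + 2^β*‖t - (fun _ => h/2 : Fin d → ℝ)‖^β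
              = 2^d*2^β*‖t - (fun _ => h/2 : Fin d → ℝ)‖^β := by ring
          linarith [hint1, hC]
        · have hD : (2:ℝ)^(-β) * ‖t - (fun _ => h/2 : Fin d → ℝ)‖^β ≤ ‖t‖^β := by
            have := mul_le_mul_of_nonneg_left hE hneg.le
            rw [← mul_assoc, hmulinv, one_mul] at this
            exact this
          linarith [hD, mul_nonneg (by linarith : (0:ℝ) ≤ (2:ℝ)^d - 1) hhb.le]
end

section
/- Let X₁, ..., Xₙ be iid random variables and let an adaptive selection procedure choose indices I₁ = 1, I₂ = i₂(X_{I₁}), ..., I_k = i_k(X_{I₁},...,X_{I_{k-1}}) with all indices distinct, and output ψ(X_{I₁}, ..., X_{I_k}). Then the output has the same distribution as ψ(X₁, ..., X_k). -/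
/-!
Induct on `k`. On the event that the `(k+1)`-st selected index is `i`, the procedure has
followed some index sequence `ι` avoiding `i`, and whether it did so, together with everything
it observed, is a function of the observations `X ∘ ι` alone. Hence the event is independent
of `X i`, so the newly observed value is independent of the past and has law `ν`; the observed
tuple therefore has law `ν^⊗k`, which is also the law of the first `k` observations.
-/

open MeasureTheory ProbabilityTheory Function

section

variable {Ω β : Type*} [MeasurableSpace Ω] {μ : Measure Ω}

lemma measure_eq_sum_inter_preimage_singleton [Fintype β] (τ : Ω → β) {F : Set Ω}
    (hF : ∀ b, MeasurableSet (F ∩ τ ⁻¹' {b})) : μ F = ∑ b, μ (F ∩ τ ⁻¹' {b}) := by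
  have hdisj : Pairwise (Disjoint on fun b => F ∩ τ ⁻¹' {b}) :=
    (pairwise_disjoint_fiber τ).mono fun _ _ h =>
      h.mono Set.inter_subset_right Set.inter_subset_right
  rw [← tsum_fintype (L := .unconditional _), ← measure_iUnion hdisj hF, ← Set.inter_iUnion,
    ← Set.preimage_iUnion, Set.iUnion_of_singleton, Set.preimage_univ, Set.inter_univ]

end

namespace AdaptiveSelection

variable {Ω 𝕏 : Type*} {n k : ℕ} {X : Fin n → Ω → 𝕏}

def IsAdaptiveRule (X : Fin n → Ω → 𝕏) (I : Fin k → Ω → Fin n)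
    (g : (j : Fin k) → (Fin j → 𝕏) → Fin n) : Prop :=
  ∀ j ω, I j ω = g j fun l => X (I ⟨l, l.isLt.trans j.isLt⟩ ω) ω

lemma IsAdaptiveRule.castSucc {I : Fin (k + 1) → Ω → Fin n}
    {g : (j : Fin (k + 1)) → (Fin j → 𝕏) → Fin n} (hI : IsAdaptiveRule X I g) :
    IsAdaptiveRule X (fun j => I j.castSucc) (fun j => g j.castSucc) :=
  fun j => hI j.castSucc

lemma IsAdaptiveRule.forall_eq_iff {I : Fin k → Ω → Fin n}
    {g : (j : Fin k) → (Fin j → 𝕏) → Fin n} (hI : IsAdaptiveRule X I g)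
    (ι : Fin k → Fin n) (ω : Ω) :
    (∀ j, I j ω = ι j) ↔ ∀ j, g j (fun l => X (ι ⟨l, l.isLt.trans j.isLt⟩) ω) = ι j := by
  refine ⟨fun h j => ?_, fun h => ?_⟩
  · rw [← h j, hI j ω]
    simp only [h]
  · suffices ∀ t (ht : t < k), I ⟨t, ht⟩ ω = ι ⟨t, ht⟩ from fun j => this j j.isLt
    intro t
    induction t using Nat.strong_induction_on with
    | _ t ih =>
      intro ht
      rw [hI, ← h]
      congr with l
      rw [ih l l.isLt]

variable [MeasurableSpace 𝕏]

abbrev sigmaOf (X : Fin n → Ω → 𝕏) (S : Set (Fin n)) : MeasurableSpace Ω :=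
  ⨆ i ∈ S, MeasurableSpace.comap (X i) ‹_›

lemma sigmaOf_mono (X : Fin n → Ω → 𝕏) {S T : Set (Fin n)} (hST : S ⊆ T) :
    sigmaOf X S ≤ sigmaOf X T :=
  biSup_mono hST

lemma measurable_sigmaOf (X : Fin n → Ω → 𝕏) {S : Set (Fin n)} {i : Fin n} (hi : i ∈ S) :
    Measurable[sigmaOf X S] (X i) :=
  Measurable.of_comap_le (le_iSup₂ (f := fun j _ => MeasurableSpace.comap (X j) ‹_›) i hi)

lemma IsAdaptiveRule.measurableSet_sigmaOf_range {I : Fin k → Ω → Fin n}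
    {g : (j : Fin k) → (Fin j → 𝕏) → Fin n}
    (hI : IsAdaptiveRule X I g) (hg : ∀ j, Measurable (g j)) (ι : Fin k → Fin n)
    {B : Set (Fin k → 𝕏)} (hB : MeasurableSet B) :
    MeasurableSet[sigmaOf X (Set.range ι)]
      {ω | (∀ j, I j ω = ι j) ∧ (fun j => X (I j ω) ω) ∈ B} := by
  set C : Set (Fin k → 𝕏) := {v | ∀ j, g j (fun l => v ⟨l, l.isLt.trans j.isLt⟩) = ι j}
  have hC : MeasurableSet C := by
    simp only [C, Set.ofPred_forall]
    exact .iInter fun j => (hg j).comp (measurable_pi_lambda _ fun l => measurable_pi_apply _)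
      (measurableSet_singleton _)
  have hV : Measurable[sigmaOf X (Set.range ι)] fun ω j => X (ι j) ω :=
    @measurable_pi_lambda _ _ _ (sigmaOf X _) _ _ fun j =>
      measurable_sigmaOf X (Set.mem_range_self j)
  convert hV (hC.inter hB) using 1
  ext ω
  rw [Set.mem_ofPred_eq, hI.forall_eq_iff ι ω]
  refine and_congr_right fun h => ?_
  simp only [(hI.forall_eq_iff ι ω).2 h]

variable [MeasurableSpace Ω]

lemma sigmaOf_le (hX : ∀ i, Measurable (X i)) (S : Set (Fin n)) :
    sigmaOf X S ≤ ‹MeasurableSpace Ω› :=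
  iSup₂_le fun i _ => (hX i).comap_le

lemma IsAdaptiveRule.measurable_apply {I : Fin k → Ω → Fin n}
    {g : (j : Fin k) → (Fin j → 𝕏) → Fin n}
    (hX : ∀ i, Measurable (X i)) (hI : IsAdaptiveRule X I g) (hg : ∀ j, Measurable (g j)) :
    Measurable fun ω j => X (I j ω) ω := by
  intro B hB
  have hsplit : (fun ω j => X (I j ω) ω) ⁻¹' B
      = ⋃ ι : Fin k → Fin n, {ω | (∀ j, I j ω = ι j) ∧ (fun j => X (I j ω) ω) ∈ B} := by
    ext ω
    simp only [Set.mem_preimage, Set.mem_iUnion, Set.mem_ofPred_eq]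
    exact ⟨fun h => ⟨fun j => I j ω, fun j => rfl, h⟩, fun ⟨_, _, h⟩ => h⟩
  rw [hsplit]
  exact .iUnion fun ι => sigmaOf_le hX _ _ (hI.measurableSet_sigmaOf_range hg ι hB)

variable {μ : Measure Ω} {ν : Measure 𝕏}

lemma measure_inter_apply_index_mem (hX : ∀ i, Measurable (X i)) (hindep : iIndepFun X μ)
    (hident : ∀ i, μ.map (X i) = ν) {τ : Ω → Fin n} {E : Set Ω}
    (hE : ∀ i, MeasurableSet[sigmaOf X {i}ᶜ] (E ∩ τ ⁻¹' {i})) {A : Set 𝕏}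
    (hA : MeasurableSet A) :
    μ (E ∩ {ω | X (τ ω) ω ∈ A}) = μ E * ν A := by
  have hEi i : MeasurableSet (E ∩ τ ⁻¹' {i}) := sigmaOf_le hX _ _ (hE i)
  have hsplit i : E ∩ {ω | X (τ ω) ω ∈ A} ∩ τ ⁻¹' {i} = E ∩ τ ⁻¹' {i} ∩ X i ⁻¹' A := by
    ext ω
    simp only [Set.mem_inter_iff, Set.mem_preimage, Set.mem_singleton_iff, Set.mem_ofPred_eq]
    constructor
    · rintro ⟨⟨hE, hA⟩, rfl⟩
      exact ⟨⟨hE, rfl⟩, hA⟩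
    · rintro ⟨⟨hE, rfl⟩, hA⟩
      exact ⟨⟨hE, hA⟩, rfl⟩
  have hfresh i : μ (E ∩ τ ⁻¹' {i} ∩ X i ⁻¹' A) = μ (E ∩ τ ⁻¹' {i}) * ν A := by
    have hind := indep_iSup_of_disjoint (fun j => (hX j).comap_le)
      ((iIndepFun_iff_iIndep _ _ _).1 hindep) (disjoint_compl_left (a := {i}))
    rw [(Indep_iff _ _ _).1 hind _ _ (hE i) (measurable_sigmaOf X (Set.mem_singleton i) hA),
      ← hident i, Measure.map_apply (hX i) hA]
  rw [measure_eq_sum_inter_preimage_singleton τ fun i => by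
      rw [hsplit]; exact (hEi i).inter (hX i hA),
    measure_eq_sum_inter_preimage_singleton τ hEi, Finset.sum_mul]
  simp only [hsplit, hfresh]

lemma IsAdaptiveRule.measure_preimage_inter_last_mem (hX : ∀ i, Measurable (X i))
    (hindep : iIndepFun X μ) (hident : ∀ i, μ.map (X i) = ν) {I : Fin (k + 1) → Ω → Fin n}
    {g : (j : Fin (k + 1)) → (Fin j → 𝕏) → Fin n} (hI : IsAdaptiveRule X I g)
    (hg : ∀ j, Measurable (g j)) (hdist : ∀ ω, Injective fun j => I j ω)
    {B : Set (Fin k → 𝕏)} (hB : MeasurableSet B) {A : Set 𝕏} (hA : MeasurableSet A) :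
    μ ((fun ω j => X (I (Fin.castSucc j) ω) ω) ⁻¹' B ∩ {ω | X (I (Fin.last k) ω) ω ∈ A})
      = μ ((fun ω j => X (I (Fin.castSucc j) ω) ω) ⁻¹' B) * ν A := by
  refine measure_inter_apply_index_mem hX hindep hident (fun i => ?_) hA
  have hsplit : (fun ω j => X (I (Fin.castSucc j) ω) ω) ⁻¹' B ∩ I (Fin.last k) ⁻¹' {i}
      = ⋃ ι : {ι : Fin k → Fin n // i ∉ Set.range ι},
        {ω | (∀ j, I j.castSucc ω = ι.1 j) ∧
          (fun j => X (I j.castSucc ω) ω) ∈ B ∩ g (Fin.last k) ⁻¹' {i}} := by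
    ext ω
    simp only [Set.mem_inter_iff, Set.mem_preimage, Set.mem_singleton_iff, Set.mem_iUnion,
      Set.mem_ofPred_eq]
    constructor
    · rintro ⟨hB, hi⟩
      refine ⟨⟨fun j => I j.castSucc ω, ?_⟩, fun j => rfl, hB, (hI _ ω).symm.trans hi⟩
      rintro ⟨j, hj⟩
      exact Fin.castSucc_ne_last j (hdist ω (hj.trans hi.symm))
    · rintro ⟨ι, -, hB, hi⟩
      exact ⟨hB, (hI _ ω).trans hi⟩
  rw [hsplit]
  exact .iUnion fun ι => sigmaOf_mono X (Set.range_subset_iff.2 fun j =>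
      Set.mem_compl_singleton_iff.2 fun hj => ι.2 ⟨j, hj⟩) _
    (hI.castSucc.measurableSet_sigmaOf_range (fun j => hg _) ι.1
      (hB.inter (hg _ (measurableSet_singleton i))))

lemma IsAdaptiveRule.measure_preimage_pi (hX : ∀ i, Measurable (X i))
    (hindep : iIndepFun X μ) (hident : ∀ i, μ.map (X i) = ν) {I : Fin k → Ω → Fin n}
    {g : (j : Fin k) → (Fin j → 𝕏) → Fin n} (hI : IsAdaptiveRule X I g)
    (hg : ∀ j, Measurable (g j)) (hdist : ∀ ω, Injective fun j => I j ω)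
    {A : Fin k → Set 𝕏} (hA : ∀ j, MeasurableSet (A j)) :
    μ ((fun ω j => X (I j ω) ω) ⁻¹' Set.univ.pi A) = ∏ j, ν (A j) := by
  induction k with
  | zero =>
    have := hindep.isProbabilityMeasure
    simp [Set.eq_univ_of_forall fun (x : Fin 0 → 𝕏) => Set.mem_univ_pi.2 finZeroElim]
  | succ k ih =>
    have hsplit : (fun ω j => X (I j ω) ω) ⁻¹' Set.univ.pi A
        = (fun ω j => X (I (Fin.castSucc j) ω) ω) ⁻¹' Set.univ.pi (fun j => A j.castSucc)
          ∩ {ω | X (I (Fin.last k) ω) ω ∈ A (Fin.last k)} := by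
      ext ω
      simp [Fin.forall_fin_succ']
    rw [hsplit, hI.measure_preimage_inter_last_mem hX hindep hident hg hdist
      (.univ_pi fun j => hA _) (hA _), Fin.prod_univ_castSucc,
      ih hI.castSucc (fun j => hg _) (fun ω => (hdist ω).comp (Fin.castSucc_injective k))
        fun j => hA _]

theorem IsAdaptiveRule.map_eq_pi [SigmaFinite ν] (hX : ∀ i, Measurable (X i))
    (hindep : iIndepFun X μ) (hident : ∀ i, μ.map (X i) = ν) {I : Fin k → Ω → Fin n}
    {g : (j : Fin k) → (Fin j → 𝕏) → Fin n} (hI : IsAdaptiveRule X I g)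
    (hg : ∀ j, Measurable (g j)) (hdist : ∀ ω, Injective fun j => I j ω) :
    μ.map (fun ω j => X (I j ω) ω) = Measure.pi fun _ => ν := by
  refine (Measure.pi_eq fun A hA => ?_).symm
  rw [Measure.map_apply (hI.measurable_apply hX hg) (.univ_pi hA)]
  exact hI.measure_preimage_pi hX hindep hident hg hdist hA

end AdaptiveSelection

theorem adaptive_selection_iid_general {Ω 𝕏 𝕏' : Type*} [MeasurableSpace Ω]
    [MeasurableSpace 𝕏] [MeasurableSpace 𝕏']
    (μ : Measure Ω) [IsProbabilityMeasure μ]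
    (n k : ℕ) (hkn : k ≤ n)
    (X : Fin n → Ω → 𝕏) (hXmeas : ∀ i, Measurable (X i))
    (hindep : iIndepFun X μ)
    (hident : ∀ i j, Measure.map (X i) μ = Measure.map (X j) μ)
    (I : Fin k → Ω → Fin n)
    (hadapt : ∀ j : Fin k, ∃ g : (Fin (j : ℕ) → 𝕏) → Fin n, Measurable g ∧
      ∀ ω, I j ω = g (fun l => X (I ⟨(l : ℕ), l.isLt.trans j.isLt⟩ ω) ω))
    (hdistinct : ∀ ω, Function.Injective fun j => I j ω)
    (ψ : (Fin k → 𝕏) → 𝕏') (hψ : Measurable ψ) :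
    Measure.map (fun ω => ψ fun j => X (I j ω) ω) μ
      = Measure.map (fun ω => ψ fun j : Fin k => X (Fin.castLE hkn j) ω) μ := by
  rcases Nat.eq_zero_or_pos k with rfl | hk
  · congr with ω
    exact congrArg ψ (Subsingleton.elim _ _)
  choose g hg hI using hadapt
  change AdaptiveSelection.IsAdaptiveRule X I g at hI
  set ν := μ.map (X ⟨0, hk.trans_le hkn⟩)
  have : IsProbabilityMeasure ν := Measure.isProbabilityMeasure_map (hXmeas _).aemeasurable
  have hν i : μ.map (X i) = ν := hident i _
  have hfirst : AdaptiveSelection.IsAdaptiveRule X (fun j _ => Fin.castLE hkn j)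
      fun j _ => Fin.castLE hkn j :=
    fun _ _ => rfl
  calc μ.map (fun ω => ψ fun j => X (I j ω) ω)
      = (μ.map fun ω j => X (I j ω) ω).map ψ :=
        (Measure.map_map hψ (hI.measurable_apply hXmeas hg)).symm
    _ = (μ.map fun ω j => X (Fin.castLE hkn j) ω).map ψ := by
        rw [hI.map_eq_pi hXmeas hindep hν hg hdistinct, hfirst.map_eq_pi hXmeas hindep hν
          (fun _ => measurable_const) fun _ => Fin.castLE_injective hkn]
    _ = μ.map fun ω => ψ fun j => X (Fin.castLE hkn j) ω :=
        Measure.map_map hψ (measurable_pi_lambda _ fun _ => hXmeas _)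

/-- Adaptively selecting k distinct indices out of n iid observations and applying a
measurable map ψ yields the same distribution as applying ψ to the first k observations. -/
theorem adaptive_selection_iid {Ω 𝕏 𝕏' : Type*} [MeasurableSpace Ω]
    [MeasurableSpace 𝕏] [MeasurableSpace 𝕏']
    (μ : Measure Ω) [IsProbabilityMeasure μ]
    (n k : ℕ) (hk : 1 ≤ k) (hkn : k ≤ n)
    (X : Fin n → Ω → 𝕏) (hXmeas : ∀ i, Measurable (X i))
    (hindep : iIndepFun X μ)
    (hident : ∀ i j, Measure.map (X i) μ = Measure.map (X j) μ)
    (I : Fin k → Ω → Fin n)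
    (hI0 : ∀ ω, I ⟨0, hk⟩ ω = ⟨0, lt_of_lt_of_le hk hkn⟩)
    (hadapt : ∀ j : Fin k, ∃ g : (Fin (j : ℕ) → 𝕏) → Fin n, Measurable g ∧
      ∀ ω, I j ω = g (fun l => X (I ⟨(l : ℕ), l.isLt.trans j.isLt⟩ ω) ω))
    (hdistinct : ∀ ω, Function.Injective fun j => I j ω)
    (ψ : (Fin k → 𝕏) → 𝕏') (hψ : Measurable ψ) :
    Measure.map (fun ω => ψ fun j => X (I j ω) ω) μ
      = Measure.map (fun ω => ψ fun j : Fin k => X (Fin.castLE hkn j) ω) μ :=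
  adaptive_selection_iid_general μ n k hkn X hXmeas hindep hident I hadapt hdistinct ψ hψ
end
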